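/- Continuity in the time approach: let Δx_a, Δx_b, Δx_c > 0 and T_a, T_b, T_c > 0 (expected payment times) satisfy Δx_a/T_a < Δx_b/T_b < Δx_c/T_c. Then the weight α = (Δx_c·T_b − T_c·Δx_b) / (T_b·(Δx_c − Δx_a) + Δx_b·(T_a − T_c)) lies in [0,1] and satisfies (α·Δx_a + (1−α)·Δx_c) / (α·T_a + (1−α)·T_c) = Δx_b/T_b. -/
import Mathlib


theorem time_continuity
    (Δxa Δxb Δxc Ta Tb Tc : ℝ)
    (hxa : 0 < Δxa) (hxb : 0 < Δxb) (hxc : 0 < Δxc)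
    (hTa : 0 < Ta) (hTb : 0 < Tb) (hTc : 0 < Tc)
    (hab : Δxa / Ta < Δxb / Tb) (hbc : Δxb / Tb < Δxc / Tc) :
    0 ≤ (Δxc * Tb - Tc * Δxb) / (Tb * (Δxc - Δxa) + Δxb * (Ta - Tc)) ∧
    (Δxc * Tb - Tc * Δxb) / (Tb * (Δxc - Δxa) + Δxb * (Ta - Tc)) ≤ 1 ∧
    (((Δxc * Tb - Tc * Δxb) / (Tb * (Δxc - Δxa) + Δxb * (Ta - Tc))) * Δxa +
        (1 - (Δxc * Tb - Tc * Δxb) / (Tb * (Δxc - Δxa) + Δxb * (Ta - Tc))) * Δxc) /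
      (((Δxc * Tb - Tc * Δxb) / (Tb * (Δxc - Δxa) + Δxb * (Ta - Tc))) * Ta +
        (1 - (Δxc * Tb - Tc * Δxb) / (Tb * (Δxc - Δxa) + Δxb * (Ta - Tc))) * Tc) =
      Δxb / Tb := by
  have h1 : Δxa * Tb < Δxb * Ta := by
    rw [div_lt_div_iff₀ hTa hTb] at hab; linarith
  have h2 : Δxb * Tc < Δxc * Tb := by
    rw [div_lt_div_iff₀ hTb hTc] at hbc; linarith
  have hM1 : 0 < Δxb * Ta - Δxa * Tb := by linarith
  have hM2 : 0 < Δxc * Tb - Tc * Δxb := by linarith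
  have hD : 0 < Tb * (Δxc - Δxa) + Δxb * (Ta - Tc) := by nlinarith
  refine ⟨div_nonneg hM2.le hD.le, (div_le_one hD).mpr (by nlinarith), ?_⟩
  have hden : 0 < ((Δxc * Tb - Tc * Δxb) / (Tb * (Δxc - Δxa) + Δxb * (Ta - Tc))) * Ta +
      (1 - (Δxc * Tb - Tc * Δxb) / (Tb * (Δxc - Δxa) + Δxb * (Ta - Tc))) * Tc := by
    have key : ((Δxc * Tb - Tc * Δxb) / (Tb * (Δxc - Δxa) + Δxb * (Ta - Tc))) * Ta +
        (1 - (Δxc * Tb - Tc * Δxb) / (Tb * (Δxc - Δxa) + Δxb * (Ta - Tc))) * Tc =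
        ((Δxc * Tb - Tc * Δxb) * Ta + (Tb * (Δxc - Δxa) + Δxb * (Ta - Tc) - (Δxc * Tb - Tc * Δxb)) * Tc)
          / (Tb * (Δxc - Δxa) + Δxb * (Ta - Tc)) := by
      field_simp
    rw [key]
    apply div_pos _ hD
    nlinarith
  rw [div_eq_div_iff hden.ne' hTb.ne']
  field_simp
  ring
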